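/- Let P be a graded poset equipped with a Morse matching M′ such that the family R_{M′}(P) of equivalence classes of rays in H_{M′}(P) is finite. Then there exists a rayless Morse matching M on P such that C_M(P) = C_{M′}(P) ∪ {c_{[r]} : [r] ∈ R_{M′}(P)}, where the c_{[r]} are elements of P \ C_{M′}(P), c_{[r]} ≠ c_{[r′]} whenever [r] ≠ [r′], and deg(c_{[r]}) equals the degree of the ray r. -/

import Mathlib

/-- A directed simple path of length `n` in the digraph with arrow relation `A`:
a sequence `p 0, …, p n` of pairwise distinct vertices with an arrow from each
vertex to the next. -/
def IsPathOn {V : Type*} (A : V → V → Prop) (n : ℕ) (p : ℕ → V) : Prop :=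
  (∀ i j, i ≤ n → j ≤ n → p i = p j → i = j) ∧ ∀ i, i < n → A (p i) (p (i + 1))

/-- A digraph is acyclic if no directed simple path can be closed up by an arrow
from its last vertex to its first. -/
def DAcyclic {V : Type*} (A : V → V → Prop) : Prop :=
  ¬ ∃ (n : ℕ) (p : ℕ → V), IsPathOn A n p ∧ A (p n) (p 0)

/-- A (directed) ray: pairwise distinct vertices `r 0, r 1, …` with an arrow from
`r i` to `r (i+1)` for every `i`. -/
def IsRay {V : Type*} (A : V → V → Prop) (r : ℕ → V) : Prop :=
  Function.Injective r ∧ ∀ i : ℕ, A (r i) (r (i + 1))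

/-- A digraph is rayless if it contains no ray. -/
def Rayless {V : Type*} (A : V → V → Prop) : Prop := ¬ ∃ r : ℕ → V, IsRay A r

/-- Two rays are equivalent if they coincide from some point on. -/
def RayEquiv {V : Type*} (r s : ℕ → V) : Prop :=
  ∃ M N : ℕ, ∀ i : ℕ, r (M + i) = s (N + i)

/-- The ray `r` has a bypass starting at `r n`: a directed simple path, not
contained in `r`, from `r n` to `r (n + k)` for some `k > 0`. -/
def HasBypassAt {V : Type*} (A : V → V → Prop) (r : ℕ → V) (n : ℕ) : Prop :=
  ∃ k : ℕ, 0 < k ∧ ∃ (m : ℕ) (p : ℕ → V), IsPathOn A m p ∧ p 0 = r n ∧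
    p m = r (n + k) ∧ ∃ i ≤ m, ∀ j : ℕ, p i ≠ r j

/-- A multiray: a ray having bypasses starting arbitrarily far along it. -/
def IsMultiray {V : Type*} (A : V → V → Prop) (r : ℕ → V) : Prop :=
  IsRay A r ∧ ∀ N : ℕ, ∃ i : ℕ, HasBypassAt A r (N + i)

/-- The family of equivalence classes of rays of the digraph `A`. -/
def RayClasses {V : Type*} (A : V → V → Prop) : Set (Set (ℕ → V)) :=
  {C | ∃ r : ℕ → V, IsRay A r ∧ C = {s | IsRay A s ∧ RayEquiv r s}}

section Poset

variable {P : Type*} [PartialOrder P]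

/-- A chain contained in the principal ideal `x↓`. -/
def IsChainIn (x : P) (C : Set P) : Prop := C ⊆ Set.Iic x ∧ IsChain (· ≤ ·) C

/-- A maximal chain in the principal ideal `x↓`. -/
def IsMaxChainIn (x : P) (C : Set P) : Prop :=
  IsChainIn x C ∧ ∀ D : Set P, IsChainIn x D → C ⊆ D → C = D

/-- `P` is graded with degree function `deg`: for every `x`, every maximal chain
in `x↓` is finite of length `deg x` (i.e. cardinality `deg x + 1`). -/
def GradedDeg (deg : P → ℕ) : Prop :=
  ∀ x : P, ∀ C : Set P, IsMaxChainIn x C → C.Finite ∧ C.ncard = deg x + 1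

/-- A matching on the Hasse diagram of `P`: a set of arrows `(x, y)` (where `x`
covers `y`) no two of which share a vertex. -/
def IsMatching (M : Set (P × P)) : Prop :=
  (∀ e ∈ M, e.2 ⋖ e.1) ∧
  ∀ e ∈ M, ∀ f ∈ M, e ≠ f → e.1 ≠ f.1 ∧ e.1 ≠ f.2 ∧ e.2 ≠ f.1 ∧ e.2 ≠ f.2

/-- The arrow relation of the digraph `H_M(P)`, obtained from the Hasse diagram
of `P` by reversing the arrows belonging to `M`. -/
def HasseM (M : Set (P × P)) (x y : P) : Prop :=
  (y ⋖ x ∧ (x, y) ∉ M) ∨ (y, x) ∈ M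

/-- A Morse matching: a matching `M` on the Hasse diagram such that `H_M(P)` is
acyclic. -/
def IsMorse (M : Set (P × P)) : Prop := IsMatching M ∧ DAcyclic (HasseM M)

/-- An element is critical for `M` if it is matched with no other element. -/
def Critical (M : Set (P × P)) (x : P) : Prop := ∀ e ∈ M, e.1 ≠ x ∧ e.2 ≠ x

/-- The set of critical elements of the matching `M`. -/
def Crit (M : Set (P × P)) : Set P := {x | Critical M x}

/-- The degree of a ray `r`: the minimal degree of an element appearing on `r`. -/
noncomputable def rayDeg (deg : P → ℕ) (r : ℕ → P) : ℕ := sInf {i | ∃ j : ℕ, deg (r j) = i}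

/-- `M₊(x)`: if `x` is matched with an element `z` of degree `deg x + 1`, the set
of elements `y ≠ x` covered by `z`; otherwise empty. -/
def Mplus (M : Set (P × P)) (deg : P → ℕ) (x : P) : Set P :=
  {y | ∃ z : P, (z, x) ∈ M ∧ deg z = deg x + 1 ∧ y ≠ x ∧ y ⋖ z}

/-- The stages `Dₖ(x)` of the construction of `D_M(x)`. -/
def Dk (M : Set (P × P)) (deg : P → ℕ) (x : P) : ℕ → Set P
  | 0 => {x}
  | (k + 1) => Dk M deg x k ∪ ⋃ y ∈ Dk M deg x k, Mplus M deg y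

/-- The vertex set of the digraph `D_M(x)`. -/
def Dset (M : Set (P × P)) (deg : P → ℕ) (x : P) : Set P := ⋃ k : ℕ, Dk M deg x k

/-- The arrow relation of the digraph `D_M(x)`: an arrow from `y` to each element
of `M₊(y)`. -/
def DArrow (M : Set (P × P)) (deg : P → ℕ) (x : P) (y z : P) : Prop :=
  y ∈ Dset M deg x ∧ z ∈ Mplus M deg y

/-- `L_M(x)`: the length of the longest directed simple path in `D_M(x)`. -/
noncomputable def LM (M : Set (P × P)) (deg : P → ℕ) (x : P) : ℕ :=
  sSup {n | ∃ p : ℕ → P, IsPathOn (DArrow M deg x) n p ∧ ∀ i ≤ n, p i ∈ Dset M deg x}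

end Poset

/-!
Induction on the number of ray classes. On a ray of `H_M(P)`, a vertex of minimal degree is followed
by an alternation of steps up along `M` and down along covers outside `M`. Call a skip of the ray a
path that leaves it and rejoins it further on. If skips started arbitrarily far along the ray,
infinitely many of them, pairwise separated, could be taken or not independently, giving infinitely
many inequivalent rays. So every ray has an alternating tail `ρ` without skips. Shifting `M` one
step along `ρ`, i.e. replacing the pairs `(ρ (2k+1), ρ (2k))` by `(ρ (2k+1), ρ (2k+2))`, keeps the
matching Morse, because between two visits of `ρ` a walk can now only step backwards along it. This
makes `ρ 0` critical, with the degree of the ray, destroys the class of `ρ`, and leaves the other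
classes in bijection with the old ones.
-/

open Relation

section Walk

variable {V : Type*} {A : V → V → Prop}

def IsWalkOn (A : V → V → Prop) (n : ℕ) (p : ℕ → V) : Prop :=
  ∀ i, i < n → A (p i) (p (i + 1))

lemma IsPathOn.isWalkOn {m : ℕ} {p : ℕ → V} (h : IsPathOn A m p) : IsWalkOn A m p := h.2

lemma IsWalkOn.drop {n : ℕ} {p : ℕ → V} (h : IsWalkOn A n p) (a : ℕ) :
    IsWalkOn A (n - a) (fun i => p (a + i)) := fun i hi => by
  simpa only [← add_assoc] using h (a + i) (by omega)

lemma IsWalkOn.transGen {n : ℕ} {p : ℕ → V} (h : IsWalkOn A n p) {a b : ℕ} (hab : a < b)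
    (hbn : b ≤ n) : TransGen A (p a) (p b) := by
  induction b, hab using Nat.le_induction with
  | base => exact .single (h a (by omega))
  | succ b _ ih => exact (ih (by omega)).tail (h b (by omega))

lemma IsWalkOn.reflTransGen {n : ℕ} {p : ℕ → V} (h : IsWalkOn A n p) {a b : ℕ} (hab : a ≤ b)
    (hbn : b ≤ n) : ReflTransGen A (p a) (p b) := by
  rcases hab.eq_or_lt with rfl | hab
  exacts [.refl, (h.transGen hab hbn).to_reflTransGen]

lemma transGen_of_arrows {r : ℕ → V} (hr : ∀ i, A (r i) (r (i + 1))) {a b : ℕ} (hab : a < b) :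
    TransGen A (r a) (r b) :=
  IsWalkOn.transGen (n := b) (fun i _ => hr i) hab le_rfl

lemma reflTransGen_of_arrows {r : ℕ → V} (hr : ∀ i, A (r i) (r (i + 1))) {a b : ℕ}
    (hab : a ≤ b) : ReflTransGen A (r a) (r b) :=
  IsWalkOn.reflTransGen (n := b) (fun i _ => hr i) hab le_rfl

lemma exists_isWalkOn_of_transGen {x y : V} (h : TransGen A x y) :
    ∃ n p, 0 < n ∧ IsWalkOn A n p ∧ p 0 = x ∧ p n = y := by
  induction h with
  | @single z hxz =>
    refine ⟨1, fun i => if i = 0 then x else z, one_pos, fun i hi => ?_, rfl, rfl⟩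
    obtain rfl : i = 0 := by omega
    simpa using hxz
  | @tail b c _ hbc ih =>
    obtain ⟨n, p, hn, hp, hp0, hpn⟩ := ih
    refine ⟨n + 1, fun i => if i ≤ n then p i else c, by omega, fun i hi => ?_, by simp [hp0],
      by simp⟩
    rcases Nat.lt_or_ge i n with hin | hin
    · simpa [hin.le, Nat.succ_le_of_lt hin] using hp i hin
    · obtain rfl : i = n := by omega
      simpa [hpn] using hbc

lemma isPathOn_zero (x : V) : IsPathOn A 0 fun _ => x :=
  ⟨fun _ _ hi hj _ => by omega, fun _ hi => absurd hi (Nat.not_lt_zero _)⟩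

lemma IsPathOn.cons {m : ℕ} {q : ℕ → V} {x : V} (hq : IsPathOn A m q) (hx : A x (q 0))
    (hne : ∀ l, l ≤ m → x ≠ q l) :
    IsPathOn A (m + 1) (fun l => if l = 0 then x else q (l - 1)) := by
  refine ⟨fun i j hi hj hij => ?_, fun i hi => ?_⟩
  · rcases Nat.eq_zero_or_pos i with rfl | hi0 <;> rcases Nat.eq_zero_or_pos j with rfl | hj0
    · rfl
    · simp only [if_true, hj0.ne', if_false] at hij
      exact absurd hij (hne _ (by omega))
    · simp only [if_true, hi0.ne', if_false] at hij
      exact absurd hij.symm (hne _ (by omega))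
    · simp only [hi0.ne', hj0.ne', if_false] at hij
      have := hq.1 _ _ (by omega) (by omega) hij
      omega
  · rcases Nat.eq_zero_or_pos i with rfl | hi0
    · simpa using hx
    · simpa [hi0.ne', Nat.sub_add_cancel hi0] using hq.2 (i - 1) (by omega)

/-- Cutting out the closed subwalk between two visits `p i = p j` of the same vertex. -/
lemma IsWalkOn.splice {n : ℕ} {p : ℕ → V} (h : IsWalkOn A n p) {i j : ℕ} (hij : i < j)
    (hjn : j ≤ n) (hpij : p i = p j) :
    ∃ q : ℕ → V, IsWalkOn A (n - (j - i)) q ∧ q 0 = p 0 ∧ q (n - (j - i)) = p n ∧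
      ∀ l, 0 < l → l < n - (j - i) → ∃ l', 0 < l' ∧ l' < n ∧ q l = p l' := by
  refine ⟨fun k => if k ≤ i then p k else p (k + (j - i)), fun k hk => ?_, by simp, ?_,
    fun l h1 h2 => ?_⟩
  · rcases lt_trichotomy (k + 1) i with hk1 | hk1 | hk1
    · simpa [hk1.le, (Nat.le_succ k).trans hk1.le] using h k (by omega)
    · have := h k (by omega)
      simp only [show k ≤ i by omega, le_refl, hk1, if_true]
      rwa [← hk1]
    · by_cases hki : k = i
      · subst hki
        simpa [hpij, show k + 1 + (j - k) = j + 1 by omega] using h j (by omega)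
      · simpa [show ¬ k ≤ i by omega, show ¬ k + 1 ≤ i by omega,
          show k + 1 + (j - i) = k + (j - i) + 1 by omega] using h (k + (j - i)) (by omega)
  · by_cases h3 : n - (j - i) ≤ i
    · simp only [h3, if_true]
      rw [show n - (j - i) = i by omega, hpij, show j = n by omega]
    · simp only [h3, if_false]
      rw [show n - (j - i) + (j - i) = n by omega]
  · by_cases hc : l ≤ i
    · exact ⟨l, h1, by omega, by simp [hc]⟩
    · exact ⟨l + (j - i), by omega, by omega, by simp [hc]⟩

lemma IsWalkOn.exists_isPathOn {n : ℕ} {p : ℕ → V} (hw : IsWalkOn A n p) (hne : p 0 ≠ p n) :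
    ∃ m q, IsPathOn A m q ∧ q 0 = p 0 ∧ q m = p n ∧
      ∀ l, 0 < l → l < m → ∃ l', 0 < l' ∧ l' < n ∧ q l = p l' := by
  induction n using Nat.strong_induction_on generalizing p with
  | _ n ih =>
  by_cases hinj : ∀ i j, i ≤ n → j ≤ n → p i = p j → i = j
  · exact ⟨n, p, ⟨hinj, hw⟩, rfl, rfl, fun l h1 h2 => ⟨l, h1, h2, rfl⟩⟩
  push Not at hinj
  obtain ⟨i, j, hi, hj, hpij, hij⟩ := hinj
  wlog hlt : i < j generalizing i j
  · exact this j i hj hi hpij.symm hij.symm (by omega)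
  obtain ⟨q, hq, hq0, hqn, hqint⟩ := hw.splice hlt hj hpij
  obtain ⟨m, q', hq', hq'0, hq'm, hint⟩ := ih _ (by omega) hq (by rwa [hq0, hqn])
  refine ⟨m, q', hq', hq'0.trans hq0, hq'm.trans hqn, fun l h1 h2 => ?_⟩
  obtain ⟨l', h1', h2', hl'⟩ := hint l h1 h2
  obtain ⟨l'', h1'', h2'', hl''⟩ := hqint l' h1' h2'
  exact ⟨l'', h1'', h2'', hl'.trans hl''⟩

lemma DAcyclic.ne_of_isWalkOn (hA : DAcyclic A) {n : ℕ} {p : ℕ → V} (hw : IsWalkOn A n p)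
    (hn : 0 < n) : p 0 ≠ p n := by
  intro h0
  have h01 : A (p 0) (p 1) := hw 0 hn
  by_cases h1 : p 1 = p n
  · exact hA ⟨0, fun _ => p 0, isPathOn_zero _, by simpa [h1, ← h0] using h01⟩
  · obtain ⟨m, q, hq, hq0, hqm, -⟩ := (hw.drop 1).exists_isPathOn
      (by simpa [show 1 + (n - 1) = n by omega] using h1)
    refine hA ⟨m, q, hq, ?_⟩
    simpa [hqm, hq0, show 1 + (n - 1) = n by omega, ← h0] using h01

lemma DAcyclic.not_transGen_self (hA : DAcyclic A) (x : V) : ¬ TransGen A x x := fun h => by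
  obtain ⟨n, p, hn, hp, hp0, hpn⟩ := exists_isWalkOn_of_transGen h
  exact hA.ne_of_isWalkOn hp hn (hp0.trans hpn.symm)

end Walk

section RayClass

variable {V : Type*} {A : V → V → Prop}

namespace RayEquiv

lemma refl (r : ℕ → V) : RayEquiv r r := ⟨0, 0, fun _ => rfl⟩

lemma symm {r s : ℕ → V} (h : RayEquiv r s) : RayEquiv s r :=
  let ⟨M, N, h⟩ := h; ⟨N, M, fun i => (h i).symm⟩

lemma trans {r s t : ℕ → V} (h₁ : RayEquiv r s) (h₂ : RayEquiv s t) : RayEquiv r t := by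
  obtain ⟨M, N, h₁⟩ := h₁
  obtain ⟨N', K, h₂⟩ := h₂
  refine ⟨M + N', K + N, fun i => ?_⟩
  rw [show M + N' + i = M + (N' + i) by omega, h₁, show N + (N' + i) = N' + (N + i) by omega, h₂,
    add_assoc]

lemma finite_range_diff {r s : ℕ → V} (h : RayEquiv r s) :
    (Set.range r \ Set.range s).Finite := by
  obtain ⟨M, N, h⟩ := h
  refine ((Set.finite_Iio M).image r).subset ?_
  rintro _ ⟨⟨n, rfl⟩, hns⟩
  refine ⟨n, Set.mem_Iio.2 (not_le.1 fun hn => hns ⟨N + (n - M), ?_⟩), rfl⟩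
  rw [← h, Nat.add_sub_cancel' hn]

end RayEquiv

lemma rayEquiv_shift (r : ℕ → V) (T : ℕ) : RayEquiv r (fun i => r (T + i)) :=
  ⟨T, 0, fun i => by simp⟩

lemma IsRay.shift {r : ℕ → V} (h : IsRay A r) (T : ℕ) : IsRay A (fun i => r (T + i)) :=
  ⟨fun _ _ hij => Nat.add_left_cancel (h.1 hij), fun i => by simpa [← add_assoc] using h.2 (T + i)⟩

def rayClass (A : V → V → Prop) (r : ℕ → V) : Set (ℕ → V) := {s | IsRay A s ∧ RayEquiv r s}

lemma rayClass_mem_rayClasses {r : ℕ → V} (h : IsRay A r) : rayClass A r ∈ RayClasses A :=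
  ⟨r, h, rfl⟩

lemma mem_rayClass_self {r : ℕ → V} (h : IsRay A r) : r ∈ rayClass A r := ⟨h, .refl r⟩

lemma rayClass_eq_of_rayEquiv {r s : ℕ → V} (h : RayEquiv r s) :
    rayClass A r = rayClass A s :=
  Set.ext fun _ => ⟨fun ⟨hu, h'⟩ => ⟨hu, h.symm.trans h'⟩, fun ⟨hu, h'⟩ => ⟨hu, h.trans h'⟩⟩

lemma eq_rayClass_of_mem {C : Set (ℕ → V)} (hC : C ∈ RayClasses A) {s : ℕ → V} (hs : s ∈ C) :
    C = rayClass A s := by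
  obtain ⟨r, -, rfl⟩ := hC
  exact rayClass_eq_of_rayEquiv hs.2

lemma isRay_of_mem {C : Set (ℕ → V)} (hC : C ∈ RayClasses A) {s : ℕ → V} (hs : s ∈ C) :
    IsRay A s := by
  obtain ⟨r, -, rfl⟩ := hC
  exact hs.1

lemma rayEquiv_of_mem {C : Set (ℕ → V)} (hC : C ∈ RayClasses A) {s t : ℕ → V} (hs : s ∈ C)
    (ht : t ∈ C) : RayEquiv s t := by
  rw [eq_rayClass_of_mem hC hs] at ht
  exact ht.2

lemma exists_equiv_rayClasses {B : V → V → Prop} {K₀ : Set (ℕ → V)} (hK₀ : K₀ ∈ RayClasses A)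
    {Q : (ℕ → V) → Prop} (hQA : ∀ t, Q t → IsRay A t) (hQB : ∀ t, Q t → IsRay B t)
    (hQK₀ : ∀ t, Q t → t ∉ K₀) (hA : ∀ s, IsRay A s → s ∉ K₀ → ∃ t, Q t ∧ RayEquiv s t)
    (hB : ∀ s, IsRay B s → ∃ t, Q t ∧ RayEquiv s t) :
    ∃ e : RayClasses B ≃ {K : RayClasses A // K.1 ≠ K₀}, ∀ C, ∃ t ∈ C.1, t ∈ (e C).1.1 := by
  have hrep : ∀ C : RayClasses B,
      ∃ K : {K : RayClasses A // K.1 ≠ K₀}, ∃ t ∈ C.1, t ∈ K.1.1 := by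
    rintro ⟨C, s, hs, rfl⟩
    obtain ⟨t, hQt, hst⟩ := hB s hs
    refine ⟨⟨⟨rayClass A t, rayClass_mem_rayClasses (hQA t hQt)⟩, fun h => hQK₀ t hQt ?_⟩, t,
      ⟨hQB t hQt, hst⟩, mem_rayClass_self (hQA t hQt)⟩
    exact h ▸ mem_rayClass_self (hQA t hQt)
  choose f t htC htK using hrep
  refine ⟨Equiv.ofBijective f ⟨fun C C' hCC' => ?_, fun K => ?_⟩, fun C => ⟨t C, htC C, htK C⟩⟩
  · have htt' : RayEquiv (t C) (t C') := rayEquiv_of_mem (f C).1.2 (htK C) (hCC' ▸ htK C')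
    refine Subtype.ext ?_
    rw [eq_rayClass_of_mem C.2 (htC C), eq_rayClass_of_mem C'.2 (htC C')]
    exact rayClass_eq_of_rayEquiv htt'
  · obtain ⟨⟨K, s, hs, rfl⟩, hK⟩ := K
    obtain ⟨u, hQu, hsu⟩ := hA s hs fun hs' => hK (eq_rayClass_of_mem hK₀ hs').symm
    let C : RayClasses B := ⟨rayClass B u, rayClass_mem_rayClasses (hQB u hQu)⟩
    have hu : RayEquiv (t C) u := (htC C).2.symm
    refine ⟨C, Subtype.ext (Subtype.ext ?_)⟩
    rw [eq_rayClass_of_mem (f C).1.2 (htK C)]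
    exact (rayClass_eq_of_rayEquiv hu).trans (rayClass_eq_of_rayEquiv hsu).symm

end RayClass

section Graded

variable {P : Type*} [PartialOrder P]

lemma exists_isMaxChainIn (x : P) : ∃ C : Set P, IsMaxChainIn x C ∧ x ∈ C := by
  obtain ⟨t, ht, hxt⟩ := (Set.subsingleton_singleton (a := (⟨x, le_rfl⟩ : Set.Iic x))).isChain
    |>.exists_maxChain
  refine ⟨Subtype.val '' t, ⟨⟨?_, ht.1.image_of_map_rel _ _ Subtype.val fun _ _ h => h⟩,
    fun D hD htD => ?_⟩, ⟨_, hxt rfl, rfl⟩⟩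
  · rintro _ ⟨z, -, rfl⟩
    exact z.2
  have hchain : IsChain (· ≤ ·) {z : Set.Iic x | z.val ∈ D} :=
    fun a ha b hb hab => hD.2 ha hb (Subtype.coe_ne_coe.2 hab)
  have hDt : {z : Set.Iic x | z.val ∈ D} = t :=
    (ht.2 hchain fun z hz => htD ⟨z, hz, rfl⟩).symm
  refine htD.antisymm fun d hd => ⟨⟨d, hD.1 hd⟩, ?_, rfl⟩
  rw [← hDt]
  exact hd

/-- A maximal chain of `x↓` through `x` extends by `y` to a maximal chain of `y↓`. -/
lemma GradedDeg.deg_eq_of_covBy {deg : P → ℕ} (hg : GradedDeg deg) {x y : P} (h : x ⋖ y) :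
    deg y = deg x + 1 := by
  obtain ⟨C, hC, hxC⟩ := exists_isMaxChainIn x
  have hyC : y ∉ C := fun hy => h.lt.not_ge (hC.1.1 hy)
  have hCy : ∀ z ∈ C, z ≤ y := fun z hz => (hC.1.1 hz).trans h.le
  have hins : IsMaxChainIn y (insert y C) := by
    refine ⟨⟨Set.insert_subset le_rfl hCy, hC.1.2.insert fun b hb _ => Or.inr (hCy b hb)⟩,
      fun D hD hCD => hCD.antisymm fun z hz => ?_⟩
    rcases (hD.1 hz).eq_or_lt with rfl | hzy
    · exact Set.mem_insert _ _
    have hzx : z ≤ x := by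
      rcases eq_or_ne z x with rfl | hne
      · exact le_rfl
      exact (hD.2 hz (hCD (Set.mem_insert_of_mem _ hxC)) hne).resolve_right
        fun hxz => h.2 (hxz.lt_of_ne hne.symm) hzy
    have hzC : insert z C = C := (hC.2 (insert z C) ⟨Set.insert_subset hzx hC.1.1,
      hC.1.2.insert fun b hb hbz => hD.2 hz (hCD (Set.mem_insert_of_mem _ hb)) hbz⟩
      (Set.subset_insert _ _)).symm
    exact Set.mem_insert_of_mem _ (hzC ▸ Set.mem_insert z C)
  have h₁ := hg x C hC
  have h₂ := hg y _ hins
  have := Set.ncard_insert_of_notMem hyC h₁.1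
  omega

end Graded

section RayDeg

variable {P : Type*} {deg : P → ℕ}

lemma rayDeg_le (s : ℕ → P) (j : ℕ) : rayDeg deg s ≤ deg (s j) := Nat.sInf_le ⟨j, rfl⟩

lemma exists_deg_eq_rayDeg (s : ℕ → P) : ∃ j, deg (s j) = rayDeg deg s :=
  Nat.sInf_mem (s := {i | ∃ j, deg (s j) = i}) ⟨_, 0, rfl⟩

end RayDeg

section Matching

variable {P : Type*} [PartialOrder P] {M : Set (P × P)} {deg : P → ℕ}

lemma IsMatching.eq_of_mem (hm : IsMatching M) {e f : P × P} (he : e ∈ M) (hf : f ∈ M)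
    (h : e.1 = f.1 ∨ e.1 = f.2 ∨ e.2 = f.1 ∨ e.2 = f.2) : e = f := by
  by_contra hne
  have := hm.2 e he f hf hne
  tauto

lemma IsMatching.notMem_of_mem (hm : IsMatching M) {x y z : P} (h : (y, x) ∈ M) :
    (z, y) ∉ M := fun h' => by
  have e := hm.eq_of_mem h h' (by simp)
  simp only [Prod.mk.injEq] at e
  obtain ⟨rfl, rfl⟩ := e
  exact (hm.1 _ h).ne rfl

lemma hasseM_cases (hm : IsMatching M) (hg : GradedDeg deg) {x y : P} (h : HasseM M x y) :
    (y ⋖ x ∧ (x, y) ∉ M ∧ deg x = deg y + 1) ∨ ((y, x) ∈ M ∧ deg y = deg x + 1) :=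
  h.imp (fun ⟨hc, hnm⟩ => ⟨hc, hnm, hg.deg_eq_of_covBy hc⟩)
    fun hmem => ⟨hmem, hg.deg_eq_of_covBy (hm.1 _ hmem)⟩

variable {s : ℕ → P}

/-- Going down would undercut the minimal degree, and two steps up in a row would use two pairs of
`M` sharing a vertex. -/
lemma hasseM_step_of_minimal (hm : IsMatching M) (hg : GradedDeg deg)
    (hs : ∀ i, HasseM M (s i) (s (i + 1))) {i : ℕ} (hi : ∀ l, deg (s i) ≤ deg (s l)) :
    (s (i + 1), s i) ∈ M ∧ s (i + 2) ⋖ s (i + 1) ∧ deg (s (i + 2)) = deg (s i) := by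
  obtain ⟨hup, hdeg⟩ : (s (i + 1), s i) ∈ M ∧ deg (s (i + 1)) = deg (s i) + 1 := by
    refine (hasseM_cases hm hg (hs i)).resolve_left ?_
    rintro ⟨-, -, hd⟩
    have := hi (i + 1)
    omega
  rcases hasseM_cases hm hg (hs (i + 1)) with ⟨hc, -, hd : deg (s (i + 1)) = deg (s (i + 2)) + 1⟩
    | ⟨h, -⟩
  · exact ⟨hup, hc, by omega⟩
  · exact absurd h (hm.notMem_of_mem hup)

lemma deg_eq_of_minimal (hm : IsMatching M) (hg : GradedDeg deg)
    (hs : ∀ i, HasseM M (s i) (s (i + 1))) {j : ℕ} (hj : ∀ l, deg (s j) ≤ deg (s l)) (k : ℕ) :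
    deg (s (j + 2 * k)) = deg (s j) := by
  induction k with
  | zero => rfl
  | succ k ih =>
    rw [← ih] at hj ⊢
    exact (hasseM_step_of_minimal hm hg hs hj).2.2

lemma exists_le_deg_eq_rayDeg (hm : IsMatching M) (hg : GradedDeg deg)
    (hs : ∀ i, HasseM M (s i) (s (i + 1))) (J : ℕ) : ∃ j, J ≤ j ∧ deg (s j) = rayDeg deg s := by
  obtain ⟨j, hj⟩ := exists_deg_eq_rayDeg (deg := deg) s
  refine ⟨j + 2 * J, by omega, ?_⟩
  rw [deg_eq_of_minimal hm hg hs (fun l => hj ▸ rayDeg_le s l) J, hj]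

lemma rayDeg_eq_of_rayEquiv (hm : IsMatching M) (hg : GradedDeg deg) {r : ℕ → P}
    (hr : ∀ i, HasseM M (r i) (r (i + 1))) (hs : ∀ i, HasseM M (s i) (s (i + 1)))
    (h : RayEquiv r s) : rayDeg deg r = rayDeg deg s := by
  suffices key : ∀ r s : ℕ → P, (∀ i, HasseM M (r i) (r (i + 1))) → RayEquiv r s →
      rayDeg deg s ≤ rayDeg deg r from le_antisymm (key s r hs h.symm) (key r s hr h)
  rintro r s hr ⟨a, b, h⟩
  obtain ⟨j, hj, hdeg⟩ := exists_le_deg_eq_rayDeg hm hg hr a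
  calc rayDeg deg s ≤ deg (s (b + (j - a))) := rayDeg_le s _
    _ = rayDeg deg r := by rw [← h, Nat.add_sub_cancel' hj, hdeg]

end Matching

section Skip

variable {V : Type*}

/-- A skip of the ray `τ`: a path from `τ i` forward to `τ j` whose interior avoids `τ`, other
than the edge `τ i → τ (i + 1)` of the ray itself. -/
structure Skip (A : V → V → Prop) (τ : ℕ → V) where
  i : ℕ
  j : ℕ
  m : ℕ
  p : ℕ → V
  i_lt_j : i < j
  isPathOn : IsPathOn A m p
  p_zero : p 0 = τ i
  p_m : p m = τ j
  interior_ne : ∀ l, 0 < l → l < m → ∀ k, p l ≠ τ k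
  not_edge : 2 ≤ m ∨ i + 1 < j

variable {A : V → V → Prop} {τ : ℕ → V}

lemma Skip.m_pos (hτ : Function.Injective τ) (d : Skip A τ) : 0 < d.m := by
  refine Nat.pos_of_ne_zero fun hm => d.i_lt_j.ne (hτ ?_)
  rw [← d.p_zero, ← d.p_m, hm]

lemma Skip.interior_ne_interior (hA : DAcyclic A) (hτ : ∀ i, A (τ i) (τ (i + 1)))
    {d d' : Skip A τ} (h : d.j < d'.i) {a b : ℕ} (ham : a < d.m) (hb : 0 < b)
    (hbm : b < d'.m) : d.p a ≠ d'.p b := by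
  intro heq
  have h₁ : TransGen A (d.p a) (τ d.j) := d.p_m ▸ d.isPathOn.isWalkOn.transGen ham le_rfl
  have h₂ : TransGen A (τ d'.i) (d'.p b) := d'.p_zero ▸ d'.isPathOn.isWalkOn.transGen hb hbm.le
  exact hA.not_transGen_self _ (h₁.trans ((transGen_of_arrows hτ h).trans (heq ▸ h₂)))

lemma exists_skip_of_skip_shift (hA : DAcyclic A) (hτ : ∀ i, A (τ i) (τ (i + 1))) {T : ℕ}
    (d : Skip A fun k => τ (T + k)) :
    ∃ d' : Skip A τ, d'.i = T + d.i := by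
  refine ⟨⟨T + d.i, T + d.j, d.m, d.p, by have := d.i_lt_j; omega, d.isPathOn, d.p_zero, d.p_m,
    fun l h₁ h₂ k hk => ?_, by have := d.not_edge; omega⟩, rfl⟩
  rcases Nat.lt_or_ge k T with hkT | hkT
  · have hpath : TransGen A (τ (T + d.i)) (τ k) := by
      rw [← hk]
      exact d.p_zero ▸ d.isPathOn.isWalkOn.transGen h₁ h₂.le
    exact hA.not_transGen_self _ (hpath.trans (transGen_of_arrows hτ (by omega)))
  · exact d.interior_ne l h₁ h₂ (k - T) (by simpa [Nat.add_sub_cancel' hkT] using hk)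

def IsSeparated (σ : ℕ → Skip A τ) : Prop := 0 < (σ 0).i ∧ ∀ t, (σ t).j < (σ (t + 1)).i

def blockStart (σ : ℕ → Skip A τ) : ℕ → ℕ
  | 0 => 0
  | t + 1 => (σ t).j

def blockLead (σ : ℕ → Skip A τ) (t : ℕ) : ℕ := (σ t).i - blockStart σ t

def blockLen (S : ℕ → Bool) (σ : ℕ → Skip A τ) (t : ℕ) : ℕ :=
  if S t then blockLead σ t + (σ t).m else (σ t).j - blockStart σ t

def blockOffset (S : ℕ → Bool) (σ : ℕ → Skip A τ) : ℕ → ℕ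
  | 0 => 0
  | t + 1 => blockOffset S σ t + blockLen S σ t

def blockOf (S : ℕ → Bool) (σ : ℕ → Skip A τ) (n : ℕ) : ℕ :=
  Nat.findGreatest (fun t => blockOffset S σ t ≤ n) n

def blockVertex (S : ℕ → Bool) (σ : ℕ → Skip A τ) (t l : ℕ) : V :=
  if S t ∧ blockLead σ t < l then (σ t).p (l - blockLead σ t) else τ (blockStart σ t + l)

/-- The ray that follows `τ` but takes the skip `σ t` exactly when `S t`. Its `t`-th block, of
length `blockLen S σ t`, starts at `τ (blockStart σ t)` and ends just before `τ (σ t).j`. -/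
def detour (S : ℕ → Bool) (σ : ℕ → Skip A τ) (n : ℕ) : V :=
  blockVertex S σ (blockOf S σ n) (n - blockOffset S σ (blockOf S σ n))

/-- A vertex lying on exactly one of two detours that disagree on whether to take `σ t`. -/
def skipWitness (σ : ℕ → Skip A τ) (t : ℕ) : V :=
  if 2 ≤ (σ t).m then (σ t).p 1 else τ ((σ t).i + 1)

variable {σ : ℕ → Skip A τ} {S : ℕ → Bool}

lemma sub_blockLead_lt_m {t l : ℕ} (hl : l < blockLen S σ t) (hb : S t ∧ blockLead σ t < l) :
    l - blockLead σ t < (σ t).m := by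
  simp only [blockLen, hb.1, if_true] at hl
  omega

namespace IsSeparated

variable (hσ : IsSeparated σ)
include hσ

lemma blockStart_lt (t : ℕ) : blockStart σ t < (σ t).i := by
  cases t with
  | zero => exact hσ.1
  | succ t => exact hσ.2 t

lemma blockStart_add_blockLead (t : ℕ) : blockStart σ t + blockLead σ t = (σ t).i := by
  have := hσ.blockStart_lt t
  unfold blockLead
  omega

lemma blockStart_mono : Monotone (blockStart σ) :=
  monotone_nat_of_le_succ fun t => ((hσ.blockStart_lt t).trans (σ t).i_lt_j).le

lemma j_lt_i {t t' : ℕ} (h : t < t') : (σ t).j < (σ t').i :=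
  (hσ.blockStart_mono (Nat.succ_le_of_lt h)).trans_lt (hσ.blockStart_lt t')

lemma blockLen_pos (hτ : Function.Injective τ) (t : ℕ) : 0 < blockLen S σ t := by
  have := hσ.blockStart_lt t
  have := (σ t).i_lt_j
  have := (σ t).m_pos hτ
  unfold blockLen
  split <;> omega

lemma blockOffset_strictMono (hτ : Function.Injective τ) : StrictMono (blockOffset S σ) :=
  strictMono_nat_of_lt_succ fun t => Nat.lt_add_of_pos_right (hσ.blockLen_pos hτ t)

lemma blockOf_eq (hτ : Function.Injective τ) {t n : ℕ} (h₁ : blockOffset S σ t ≤ n)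
    (h₂ : n < blockOffset S σ (t + 1)) : blockOf S σ n = t := by
  have hmono := hσ.blockOffset_strictMono (S := S) hτ
  have hle : t ≤ blockOf S σ n := Nat.le_findGreatest (hmono.le_apply.trans h₁) h₁
  have hspec : blockOffset S σ (blockOf S σ n) ≤ n :=
    Nat.findGreatest_spec (P := fun t => blockOffset S σ t ≤ n) (Nat.zero_le n) (Nat.zero_le n)
  by_contra hne
  have := hmono.monotone (show t + 1 ≤ blockOf S σ n by omega)
  omega

lemma exists_detour_eq (hτ : Function.Injective τ) (n : ℕ) :
    ∃ t l, l < blockLen S σ t ∧ n = blockOffset S σ t + l ∧ detour S σ n = blockVertex S σ t l := by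
  have hmono := hσ.blockOffset_strictMono (S := S) hτ
  have hspec : blockOffset S σ (blockOf S σ n) ≤ n :=
    Nat.findGreatest_spec (P := fun t => blockOffset S σ t ≤ n) (Nat.zero_le n) (Nat.zero_le n)
  have hlt : n < blockOffset S σ (blockOf S σ n + 1) := by
    by_contra! h
    have : blockOf S σ n + 1 ≤ blockOf S σ n :=
      Nat.le_findGreatest (P := fun t => blockOffset S σ t ≤ n) ((hmono.le_apply).trans h) h
    omega
  exact ⟨blockOf S σ n, _, by simp only [blockOffset] at hlt; omega, by omega, rfl⟩

lemma detour_blockOffset_add (hτ : Function.Injective τ) {t l : ℕ} (hl : l < blockLen S σ t) :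
    detour S σ (blockOffset S σ t + l) = blockVertex S σ t l := by
  have ht : blockOf S σ (blockOffset S σ t + l) = t :=
    hσ.blockOf_eq hτ (by omega) (by simp only [blockOffset]; omega)
  simp only [detour, ht, Nat.add_sub_cancel_left]

lemma mem_range_detour (hτ : Function.Injective τ) {x : V} :
    x ∈ Set.range (detour S σ) ↔ ∃ t l, l < blockLen S σ t ∧ blockVertex S σ t l = x := by
  constructor
  · rintro ⟨n, rfl⟩
    obtain ⟨t, l, hl, -, h⟩ := hσ.exists_detour_eq hτ n
    exact ⟨t, l, hl, h.symm⟩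
  · rintro ⟨t, l, hl, rfl⟩
    exact ⟨_, hσ.detour_blockOffset_add hτ hl⟩

lemma blockStart_add_lt_j {t l : ℕ} (hl : l < blockLen S σ t)
    (hb : ¬ (S t ∧ blockLead σ t < l)) : blockStart σ t + l < (σ t).j := by
  have := hσ.blockStart_add_blockLead t
  have := (σ t).i_lt_j
  unfold blockLen at hl
  cases hS : S t <;> simp only [hS, Bool.false_eq_true, false_and, true_and, if_true, if_false]
    at hl hb <;> omega

lemma blockVertex_inj (hA : DAcyclic A) (hτ : IsRay A τ) {t t' l l' : ℕ}
    (hl : l < blockLen S σ t) (hl' : l' < blockLen S σ t')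
    (h : blockVertex S σ t l = blockVertex S σ t' l') : t = t' ∧ l = l' := by
  unfold blockVertex at h
  by_cases hb : S t ∧ blockLead σ t < l <;> by_cases hb' : S t' ∧ blockLead σ t' < l' <;>
    simp only [hb, hb', if_false] at h
  · have ha := sub_blockLead_lt_m hl hb
    have ha' := sub_blockLead_lt_m hl' hb'
    rcases lt_trichotomy t t' with htt | rfl | htt
    · exact absurd h (Skip.interior_ne_interior hA hτ.2 (hσ.j_lt_i htt) ha (by omega) ha')
    · exact ⟨rfl, by have := (σ t).isPathOn.1 _ _ ha.le ha'.le h; omega⟩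
    · exact absurd h.symm (Skip.interior_ne_interior hA hτ.2 (hσ.j_lt_i htt) ha' (by omega) ha)
  · exact absurd h ((σ t).interior_ne _ (by omega) (sub_blockLead_lt_m hl hb) _)
  · exact absurd h.symm ((σ t').interior_ne _ (by omega) (sub_blockLead_lt_m hl' hb') _)
  · have hidx := hτ.1 h
    have h₁ := hσ.blockStart_add_lt_j hl hb
    have h₂ := hσ.blockStart_add_lt_j hl' hb'
    rcases lt_trichotomy t t' with htt | rfl | htt
    · have : (σ t).j ≤ blockStart σ t' := hσ.blockStart_mono (Nat.succ_le_of_lt htt)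
      omega
    · exact ⟨rfl, by omega⟩
    · have : (σ t').j ≤ blockStart σ t := hσ.blockStart_mono (Nat.succ_le_of_lt htt)
      omega

lemma blockVertex_arrow (hτ : ∀ i, A (τ i) (τ (i + 1))) {t l : ℕ}
    (hl : l + 1 < blockLen S σ t) : A (blockVertex S σ t l) (blockVertex S σ t (l + 1)) := by
  unfold blockVertex
  by_cases hS : S t
  · simp only [blockLen, hS, if_true] at hl
    rcases lt_trichotomy (blockLead σ t) l with h | h | h
    · rw [if_pos ⟨hS, h⟩, if_pos ⟨hS, by omega⟩, Nat.sub_add_comm h.le]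
      exact (σ t).isPathOn.2 _ (by omega)
    · rw [if_neg fun hc => hc.2.ne h, if_pos ⟨hS, by omega⟩, ← h, Nat.add_sub_cancel_left,
        hσ.blockStart_add_blockLead, ← (σ t).p_zero]
      exact (σ t).isPathOn.2 0 (by omega)
    · rw [if_neg fun hc => by omega, if_neg fun hc => by omega]
      exact hτ _
  · simp only [hS]
    exact hτ _

lemma blockVertex_last_arrow (hτ : IsRay A τ) (t : ℕ) :
    A (blockVertex S σ t (blockLen S σ t - 1)) (blockVertex S σ (t + 1) 0) := by
  have := hσ.blockStart_add_blockLead t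
  have := (σ t).i_lt_j
  have hm := (σ t).m_pos hτ.1
  have hnext : blockVertex S σ (t + 1) 0 = τ (σ t).j := by simp [blockVertex, blockStart]
  rw [hnext, ← (σ t).p_m]
  unfold blockVertex blockLen
  by_cases hS : S t
  · simp only [hS, true_and, if_true]
    rcases Nat.lt_or_ge 1 (σ t).m with hm2 | hm1
    · rw [if_pos (by omega),
        show blockLead σ t + (σ t).m - 1 - blockLead σ t = (σ t).m - 1 by omega]
      simpa [Nat.sub_add_cancel hm] using (σ t).isPathOn.2 ((σ t).m - 1) (by omega)
    · replace hm1 : 1 = (σ t).m := by omega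
      rw [if_neg (by omega), ← hm1, show blockStart σ t + (blockLead σ t + 1 - 1) = (σ t).i by
        omega, ← (σ t).p_zero]
      simpa [← hm1] using (σ t).isPathOn.2 0 (by omega)
  · simp only [hS, (σ t).p_m]
    simpa [show blockStart σ t + ((σ t).j - blockStart σ t - 1) + 1 = (σ t).j by omega] using
      hτ.2 (blockStart σ t + ((σ t).j - blockStart σ t - 1))

lemma isRay_detour (hA : DAcyclic A) (hτ : IsRay A τ) : IsRay A (detour S σ) := by
  refine ⟨fun n n' h => ?_, fun n => ?_⟩
  · obtain ⟨t, l, hl, rfl, hn⟩ := hσ.exists_detour_eq (S := S) hτ.1 n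
    obtain ⟨t', l', hl', rfl, hn'⟩ := hσ.exists_detour_eq (S := S) hτ.1 n'
    obtain ⟨rfl, rfl⟩ := hσ.blockVertex_inj hA hτ hl hl' (hn.symm.trans (h.trans hn'))
    rfl
  · obtain ⟨t, l, hl, rfl, hn⟩ := hσ.exists_detour_eq (S := S) hτ.1 n
    rw [hn]
    by_cases hend : l + 1 < blockLen S σ t
    · rw [add_assoc, hσ.detour_blockOffset_add hτ.1 hend]
      exact hσ.blockVertex_arrow hτ.2 hend
    · have hl1 : l = blockLen S σ t - 1 := by omega
      have : blockOffset S σ t + l + 1 = blockOffset S σ (t + 1) + 0 := by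
        simp only [blockOffset]
        omega
      rw [this, hσ.detour_blockOffset_add hτ.1 (hσ.blockLen_pos hτ.1 _), hl1]
      exact hσ.blockVertex_last_arrow hτ t

lemma p_one_mem_range_detour (hτ : Function.Injective τ) {t : ℕ} (hS : S t = true)
    (hm : 2 ≤ (σ t).m) : (σ t).p 1 ∈ Set.range (detour S σ) := by
  refine (hσ.mem_range_detour hτ).2 ⟨t, blockLead σ t + 1, ?_, ?_⟩
  · simp only [blockLen, hS, if_true]
    omega
  · simp [blockVertex, hS]

lemma p_notMem_range_detour (hA : DAcyclic A) (hτ : IsRay A τ) {t a : ℕ} (hS : S t = false)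
    (ha : 0 < a) (ham : a < (σ t).m) : (σ t).p a ∉ Set.range (detour S σ) := by
  rw [hσ.mem_range_detour hτ.1]
  rintro ⟨t', l, hl, h⟩
  unfold blockVertex at h
  split_ifs at h with hb
  · have hl' := sub_blockLead_lt_m hl hb
    rcases lt_trichotomy t' t with htt | rfl | htt
    · exact Skip.interior_ne_interior hA hτ.2 (hσ.j_lt_i htt) hl' ha ham h
    · simp [hS] at hb
    · exact Skip.interior_ne_interior hA hτ.2 (hσ.j_lt_i htt) ham (by omega) hl' h.symm
  · exact (σ t).interior_ne a ha ham _ h.symm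

lemma tau_mem_range_detour (hτ : Function.Injective τ) {t k : ℕ} (hS : S t = false)
    (hk : blockStart σ t ≤ k) (hkj : k < (σ t).j) : τ k ∈ Set.range (detour S σ) := by
  refine (hσ.mem_range_detour hτ).2 ⟨t, k - blockStart σ t, ?_, ?_⟩
  · simp only [blockLen, hS, Bool.false_eq_true, if_false]
    omega
  · simp [blockVertex, hS, Nat.add_sub_cancel' hk]

lemma tau_notMem_range_detour (hτ : Function.Injective τ) {t k : ℕ} (hS : S t = true)
    (hik : (σ t).i < k) (hkj : k < (σ t).j) : τ k ∉ Set.range (detour S σ) := by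
  rw [hσ.mem_range_detour hτ]
  rintro ⟨t', l, hl, h⟩
  unfold blockVertex at h
  split_ifs at h with hb
  · exact (σ t').interior_ne _ (by omega) (sub_blockLead_lt_m hl hb) k h
  · have hk := hτ h
    have hlt := hσ.blockStart_add_lt_j hl hb
    have := hσ.blockStart_lt t
    rcases lt_trichotomy t' t with htt | rfl | htt
    · have : (σ t').j ≤ blockStart σ t := hσ.blockStart_mono (Nat.succ_le_of_lt htt)
      omega
    · have := hσ.blockStart_add_blockLead t'
      simp only [hS, true_and, not_lt] at hb
      omega
    · have : (σ t).j ≤ blockStart σ t' := hσ.blockStart_mono (Nat.succ_le_of_lt htt)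
      omega

lemma skipWitness_mem_symmDiff (hA : DAcyclic A) (hτ : IsRay A τ) {S' : ℕ → Bool} {t : ℕ}
    (hS : S t = true) (hS' : S' t = false) :
    skipWitness σ t ∈ symmDiff (Set.range (detour S σ)) (Set.range (detour S' σ)) := by
  have hm := (σ t).m_pos hτ.1
  rw [Set.mem_symmDiff]
  unfold skipWitness
  split_ifs with h2
  · exact .inl ⟨hσ.p_one_mem_range_detour hτ.1 hS h2,
      hσ.p_notMem_range_detour hA hτ hS' one_pos (by omega)⟩
  · have hij : (σ t).i + 1 < (σ t).j := (σ t).not_edge.resolve_left h2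
    have := hσ.blockStart_lt t
    exact .inr ⟨hσ.tau_mem_range_detour hτ.1 hS' (by omega) hij,
      hσ.tau_notMem_range_detour hτ.1 hS (by omega) hij⟩

lemma skipWitness_injective (hA : DAcyclic A) (hτ : IsRay A τ) :
    Function.Injective (skipWitness σ) := by
  suffices key : ∀ t t', t < t' → skipWitness σ t ≠ skipWitness σ t' from
    fun t t' h => by_contra fun hne => (lt_or_gt_of_ne hne).elim (key t t' · h) (key t' t · h.symm)
  intro t t' htt h
  have hm := (σ t).m_pos hτ.1
  have hm' := (σ t').m_pos hτ.1
  have hji := hσ.j_lt_i htt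
  unfold skipWitness at h
  split_ifs at h with h₁ h₂ h₂
  · exact Skip.interior_ne_interior hA hτ.2 hji (by omega) one_pos (by omega) h
  · exact (σ t).interior_ne 1 one_pos (by omega) _ h
  · exact (σ t').interior_ne 1 one_pos (by omega) _ h.symm
  · have := hτ.1 h
    have := (σ t).i_lt_j
    omega

end IsSeparated

/-- Otherwise there is a separated sequence of skips, and the detours taking the skips indexed by
the pairwise disjoint infinite sets `{t | (unpair t).1 = k}` are pairwise inequivalent rays. -/
theorem exists_forall_skip_i_lt (hA : DAcyclic A) (hτ : IsRay A τ)
    (hfin : (RayClasses A).Finite) : ∃ N, ∀ d : Skip A τ, d.i < N := by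
  by_contra! h
  choose f hf using h
  let σ : ℕ → Skip A τ := fun t => Nat.rec (motive := fun _ => Skip A τ) (f 1)
    (fun _ d => f (d.j + 1)) t
  have hσ : IsSeparated σ := ⟨hf 1, fun t => hf ((σ t).j + 1)⟩
  let S : ℕ → ℕ → Bool := fun k t => (Nat.unpair t).1 = k
  have hS : ∀ k m, S k (Nat.pair k m) = true := fun k m => by simp [S]
  have hS' : ∀ k l m, k ≠ l → S l (Nat.pair k m) = false := fun k l m hkl => by simp [S, hkl]
  have hne : ∀ k l, k ≠ l → ¬ RayEquiv (detour (S k) σ) (detour (S l) σ) := by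
    intro k l hkl heq
    refine Set.infinite_of_injective_forall_mem (f := fun m => skipWitness σ (Nat.pair k m))
      (fun m m' h => (Nat.pair_eq_pair.1 (hσ.skipWitness_injective hA hτ h)).2)
      (fun m => hσ.skipWitness_mem_symmDiff hA hτ (hS k m) (hS' k l m hkl))
      (heq.finite_range_diff.union heq.symm.finite_range_diff)
  have hinj : Function.Injective fun k => rayClass A (detour (S k) σ) := by
    intro k l hkl
    by_contra hkl'
    have hmem : detour (S l) σ ∈ rayClass A (detour (S k) σ) := by
      rw [show rayClass A (detour (S k) σ) = _ from hkl]
      exact mem_rayClass_self (hσ.isRay_detour hA hτ)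
    exact hne k l hkl' hmem.2
  exact Set.infinite_of_injective_forall_mem hinj
    (fun k => rayClass_mem_rayClasses (hσ.isRay_detour hA hτ)) hfin

end Skip

section Flip

variable {P : Type*} {M : Set (P × P)} {ρ : ℕ → P}

def flipAlong (M : Set (P × P)) (ρ : ℕ → P) : Set (P × P) :=
  (M \ Set.range fun k => (ρ (2 * k + 1), ρ (2 * k))) ∪
    Set.range fun k => (ρ (2 * k + 1), ρ (2 * k + 2))

lemma mem_flipAlong_iff {x y : P} (h : x ∉ Set.range ρ ∨ y ∉ Set.range ρ) :
    (x, y) ∈ flipAlong M ρ ↔ (x, y) ∈ M := by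
  refine ⟨?_, fun hm => .inl ⟨hm, ?_⟩⟩
  · rintro (hm | ⟨k, hk⟩)
    · exact hm.1
    · simp only [Prod.mk.injEq] at hk
      rcases h with h | h
      exacts [absurd ⟨_, hk.1⟩ h, absurd ⟨_, hk.2⟩ h]
  · rintro ⟨k, hk⟩
    simp only [Prod.mk.injEq] at hk
    rcases h with h | h
    exacts [h ⟨_, hk.1⟩, h ⟨_, hk.2⟩]

variable [PartialOrder P]

lemma hasseM_flipAlong_iff {x y : P} (h : x ∉ Set.range ρ ∨ y ∉ Set.range ρ) :
    HasseM (flipAlong M ρ) x y ↔ HasseM M x y := by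
  unfold HasseM
  rw [mem_flipAlong_iff h, mem_flipAlong_iff h.symm]

structure IsFlippable (M : Set (P × P)) (ρ : ℕ → P) : Prop where
  isMorse : IsMorse M
  injective : Function.Injective ρ
  up_mem : ∀ k, (ρ (2 * k + 1), ρ (2 * k)) ∈ M
  down_covBy : ∀ k, ρ (2 * k + 2) ⋖ ρ (2 * k + 1)
  isEmpty_skip : IsEmpty (Skip (HasseM M) ρ)

namespace IsFlippable

variable (hF : IsFlippable M ρ)
include hF

lemma down_notMem (k : ℕ) : (ρ (2 * k + 1), ρ (2 * k + 2)) ∉ M := fun h => by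
  have := congrArg Prod.snd (hF.isMorse.1.eq_of_mem h (hF.up_mem k) (.inl rfl))
  exact absurd (hF.injective this) (by omega)

lemma hasseM_succ (n : ℕ) : HasseM M (ρ n) (ρ (n + 1)) := by
  obtain ⟨k, rfl | rfl⟩ := Nat.even_or_odd' n
  · exact .inr (hF.up_mem k)
  · exact .inl ⟨hF.down_covBy k, hF.down_notMem k⟩

lemma isRay : IsRay (HasseM M) ρ := ⟨hF.injective, hF.hasseM_succ⟩

lemma exists_eq_of_mem {e : P × P} (he : e ∈ M) {s : ℕ} (hs : e.1 = ρ s ∨ e.2 = ρ s) :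
    ∃ k, (ρ (2 * k + 1), ρ (2 * k)) = e := by
  obtain ⟨k, rfl | rfl⟩ := Nat.even_or_odd' s
  · exact ⟨k, (hF.isMorse.1.eq_of_mem he (hF.up_mem k) (by tauto)).symm⟩
  · exact ⟨k, (hF.isMorse.1.eq_of_mem he (hF.up_mem k) (by tauto)).symm⟩

lemma notMem_range_of_mem_diff {e : P × P}
    (he : e ∈ M \ Set.range fun k => (ρ (2 * k + 1), ρ (2 * k))) :
    e.1 ∉ Set.range ρ ∧ e.2 ∉ Set.range ρ := by
  constructor <;> rintro ⟨s, hs⟩ <;> exact he.2 (hF.exists_eq_of_mem he.1 (by tauto))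

lemma isMatching_flipAlong : IsMatching (flipAlong M ρ) := by
  refine ⟨?_, ?_⟩
  · rintro e (he | ⟨k, rfl⟩)
    exacts [hF.isMorse.1.1 e he.1, hF.down_covBy k]
  have hne : ∀ {a b}, a ≠ b → ρ a ≠ ρ b := fun h hc => h (hF.injective hc)
  rintro e (he | ⟨k, rfl⟩) f (hf | ⟨k', rfl⟩) hef
  · exact hF.isMorse.1.2 e he.1 f hf.1 hef
  · obtain ⟨h₁, h₂⟩ := hF.notMem_range_of_mem_diff he
    exact ⟨fun h => h₁ ⟨_, h.symm⟩, fun h => h₁ ⟨_, h.symm⟩, fun h => h₂ ⟨_, h.symm⟩,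
      fun h => h₂ ⟨_, h.symm⟩⟩
  · obtain ⟨h₁, h₂⟩ := hF.notMem_range_of_mem_diff hf
    exact ⟨fun h => h₁ ⟨_, h⟩, fun h => h₂ ⟨_, h⟩, fun h => h₁ ⟨_, h⟩, fun h => h₂ ⟨_, h⟩⟩
  · have hkk : k ≠ k' := fun h => hef (h ▸ rfl)
    exact ⟨hne (by omega), hne (by omega), hne (by omega), hne (by omega)⟩

lemma eq_succ_of_hasseM {a b : ℕ} (h : HasseM M (ρ a) (ρ b)) : b = a + 1 := by
  by_contra hne
  rcases Nat.lt_or_ge a b with hab | hba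
  · have hρ : ρ a ≠ ρ b := fun hc => hab.ne (hF.injective hc)
    exact hF.isEmpty_skip.false ⟨a, b, 1, _, hab,
      (isPathOn_zero (ρ b)).cons h fun _ _ => hρ, rfl, rfl, fun _ _ _ => by omega,
      .inr (by omega)⟩
  · exact hF.isMorse.2.not_transGen_self _
      (.head' h (reflTransGen_of_arrows hF.hasseM_succ hba))

/-- A longer walk would contain a skip if it goes forward along `ρ`, and close a cycle with `ρ`
otherwise. -/
lemma eq_one_of_isWalkOn {n : ℕ} {p : ℕ → P} (hw : IsWalkOn (HasseM M) n p) (hn : 0 < n)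
    {a b : ℕ} (h0 : p 0 = ρ a) (hpn : p n = ρ b)
    (hint : ∀ l, 0 < l → l < n → p l ∉ Set.range ρ) : n = 1 := by
  by_contra hn1
  rcases Nat.lt_or_ge a b with hab | hba
  · have hne : p (1 + 0) ≠ p (1 + (n - 1)) := by
      rw [Nat.add_sub_cancel' hn, hpn]
      exact fun h => hint 1 one_pos (by omega) ⟨b, h.symm⟩
    obtain ⟨m, q, hq, hq0, hqm, hqint⟩ := (hw.drop 1).exists_isPathOn hne
    simp only [Nat.add_zero, Nat.add_sub_cancel' hn, hpn] at hq0 hqm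
    have hoff : ∀ l, l < m → q l ∉ Set.range ρ := by
      intro l hl
      rcases Nat.eq_zero_or_pos l with rfl | hl0
      · exact hq0 ▸ hint 1 one_pos (by omega)
      · obtain ⟨l', h₁, h₂, hl'⟩ := hqint l hl0 hl
        exact hl' ▸ hint _ (by omega) (by omega)
    have hm : 0 < m := Nat.pos_of_ne_zero fun hm =>
      hint 1 one_pos (by omega) ⟨b, by subst hm; exact hqm.symm.trans hq0⟩
    refine hF.isEmpty_skip.false ⟨a, b, m + 1, _, hab,
      hq.cons (by rw [hq0, ← h0]; exact hw 0 hn) (fun l hl hc => ?_), rfl, by simpa using hqm,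
      fun l h₁ h₂ k hk => hoff (l - 1) (by omega) ⟨k, by simpa [h₁.ne'] using hk.symm⟩,
      .inl (by omega)⟩
    rcases hl.lt_or_eq with hl | rfl
    · exact hoff l hl ⟨a, hc⟩
    · exact hab.ne (hF.injective (hc.trans hqm))
  · exact hF.isMorse.2.not_transGen_self _ ((h0 ▸ hpn ▸ hw.transGen hn le_rfl).trans_left
      (reflTransGen_of_arrows hF.hasseM_succ hba))

lemma succ_eq_of_hasseM_flipAlong {a b : ℕ} (h : HasseM (flipAlong M ρ) (ρ a) (ρ b)) :
    b + 1 = a := by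
  rcases h with ⟨hc, hnm⟩ | (hm | ⟨k, hk⟩)
  · by_cases hM : (ρ a, ρ b) ∈ M
    · obtain ⟨k, hk⟩ := hF.exists_eq_of_mem hM (.inl rfl)
      simp only [Prod.mk.injEq] at hk
      have := hF.injective hk.1
      have := hF.injective hk.2
      omega
    obtain rfl := hF.eq_succ_of_hasseM (.inl ⟨hc, hM⟩)
    obtain ⟨k, rfl | rfl⟩ := Nat.even_or_odd' a
    · exact absurd hc.lt (hF.isMorse.1.1 _ (hF.up_mem k)).lt.asymm
    · exact absurd (.inr ⟨k, rfl⟩) hnm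
  · exact absurd ⟨_, rfl⟩ (hF.notMem_range_of_mem_diff hm).1
  · simp only [Prod.mk.injEq] at hk
    have := hF.injective hk.1
    have := hF.injective hk.2
    omega

/-- Between consecutive visits of `ρ` a walk is a single reversed arrow: a longer excursion off
`ρ` would be a walk of `H_M(P)`, excluded by `eq_one_of_isWalkOn`. -/
lemma eq_add_of_isWalkOn_flipAlong {n : ℕ} {p : ℕ → P}
    (hw : IsWalkOn (HasseM (flipAlong M ρ)) n p) {a b : ℕ} (h0 : p 0 = ρ a) (hpn : p n = ρ b) :
    a = b + n := by
  induction n using Nat.strong_induction_on generalizing p a with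
  | _ n ih =>
  rcases Nat.eq_zero_or_pos n with rfl | hn
  · exact hF.injective (h0.symm.trans hpn)
  classical
  have hex : ∃ l, 0 < l ∧ l ≤ n ∧ p l ∈ Set.range ρ := ⟨n, hn, le_rfl, b, hpn.symm⟩
  obtain ⟨hL, hLn, c, hc⟩ := Nat.find_spec hex
  have hint : ∀ l, 0 < l → l < Nat.find hex → p l ∉ Set.range ρ :=
    fun l h₁ h₂ hl => Nat.find_min hex h₂ ⟨h₁, by omega, hl⟩
  have hwM : 2 ≤ Nat.find hex → IsWalkOn (HasseM M) (Nat.find hex) p := fun h2 i hi =>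
    (hasseM_flipAlong_iff (by
      rcases Nat.eq_zero_or_pos i with rfl | hi0
      exacts [.inr (hint 1 one_pos (by omega)), .inl (hint i hi0 hi)])).1 (hw i (by omega))
  have hL1 : Nat.find hex = 1 := by
    by_contra hL1
    exact hL1 (hF.eq_one_of_isWalkOn (hwM (by omega)) hL h0 hc.symm hint)
  have hca : c + 1 = a := hF.succ_eq_of_hasseM_flipAlong (by
    rw [← h0, hc, hL1]
    exact hw 0 hn)
  have := ih (n - 1) (by omega) (hw.drop 1) (a := c) (by simpa [← hL1] using hc.symm)
    (by simpa [Nat.add_sub_cancel' hn] using hpn)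
  omega

lemma lt_of_transGen_flipAlong {a b : ℕ} (h : TransGen (HasseM (flipAlong M ρ)) (ρ a) (ρ b)) :
    b < a := by
  obtain ⟨n, p, hn, hp, hp0, hpn⟩ := exists_isWalkOn_of_transGen h
  have := hF.eq_add_of_isWalkOn_flipAlong hp hp0 hpn
  omega

lemma dAcyclic_flipAlong : DAcyclic (HasseM (flipAlong M ρ)) := by
  rintro ⟨n, p, hp, hclose⟩
  by_cases hvis : ∃ k ≤ n, p k ∈ Set.range ρ
  · obtain ⟨k, hk, c, hc⟩ := hvis
    have hcycle : TransGen (HasseM (flipAlong M ρ)) (p k) (p k) :=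
      (TransGen.tail' (hp.isWalkOn.reflTransGen hk le_rfl) hclose).trans_left
        (hp.isWalkOn.reflTransGen (Nat.zero_le k) hk)
    exact lt_irrefl c (hF.lt_of_transGen_flipAlong (hc ▸ hcycle))
  · push Not at hvis
    refine hF.isMorse.2 ⟨n, p, ⟨hp.1, fun i hi => ?_⟩, ?_⟩
    · exact (hasseM_flipAlong_iff (.inl (hvis i hi.le))).1 (hp.2 i hi)
    · exact (hasseM_flipAlong_iff (.inl (hvis n le_rfl))).1 hclose

lemma isMorse_flipAlong : IsMorse (flipAlong M ρ) :=
  ⟨hF.isMatching_flipAlong, hF.dAcyclic_flipAlong⟩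

lemma exists_tail_notMem_range_of_flipAlong {s : ℕ → P}
    (hs : ∀ i, HasseM (flipAlong M ρ) (s i) (s (i + 1))) :
    ∃ T, ∀ n, T ≤ n → s n ∉ Set.range ρ := by
  by_contra! h
  obtain ⟨n₀, -, c₀, hc₀⟩ := h 0
  obtain ⟨n₁, hn₁, c₁, hc₁⟩ := h (n₀ + c₀ + 1)
  have := hF.eq_add_of_isWalkOn_flipAlong (fun i _ => hs (n₀ + i) : IsWalkOn _ (n₁ - n₀) _)
    (a := c₀) (b := c₁) (by simpa using hc₀.symm)
    (by simpa [Nat.add_sub_cancel' (show n₀ ≤ n₁ by omega)] using hc₁.symm)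
  omega

lemma succ_eq_of_returns {s : ℕ → P} (hs : ∀ i, HasseM M (s i) (s (i + 1))) {n c : ℕ}
    (hn : s n = ρ c) (hvis : ∃ n', n < n' ∧ s n' ∈ Set.range ρ) : s (n + 1) = ρ (c + 1) := by
  classical
  have hex : ∃ l, 0 < l ∧ s (n + l) ∈ Set.range ρ :=
    let ⟨n', h, hn'⟩ := hvis; ⟨n' - n, by omega, by rwa [Nat.add_sub_cancel' h.le]⟩
  obtain ⟨hL, c', hc'⟩ := Nat.find_spec hex
  have hw : IsWalkOn (HasseM M) (Nat.find hex) fun i => s (n + i) := fun i _ => hs (n + i)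
  have hL1 : Nat.find hex = 1 := hF.eq_one_of_isWalkOn hw hL hn hc'.symm
    fun l h₁ h₂ hl => Nat.find_min hex h₂ ⟨h₁, hl⟩
  rw [hL1] at hc'
  have := hF.eq_succ_of_hasseM (hn ▸ hc' ▸ hs n)
  rw [← hc', this]

lemma exists_tail_notMem_range_or_rayEquiv {s : ℕ → P}
    (hs : ∀ i, HasseM M (s i) (s (i + 1))) :
    (∃ T, ∀ n, T ≤ n → s n ∉ Set.range ρ) ∨ RayEquiv ρ s := by
  refine or_iff_not_imp_left.2 fun h => ?_
  push Not at h
  obtain ⟨n₀, -, c₀, hc₀⟩ := h 0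
  have hfollow : ∀ k, s (n₀ + k) = ρ (c₀ + k) := by
    intro k
    induction k with
    | zero => exact hc₀.symm
    | succ k ih =>
      obtain ⟨n', hn', hvis⟩ := h (n₀ + k + 1)
      exact hF.succ_eq_of_returns hs (n := n₀ + k) ih ⟨n', by omega, hvis⟩
  exact ⟨c₀, n₀, fun i => (hfollow i).symm⟩

lemma notMem_crit (k : ℕ) : ρ k ∉ Crit M := fun hcrit => by
  obtain ⟨k', rfl | rfl⟩ := Nat.even_or_odd' k
  exacts [(hcrit _ (hF.up_mem k')).2 rfl, (hcrit _ (hF.up_mem k')).1 rfl]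

lemma zero_mem_crit_flipAlong : ρ 0 ∈ Crit (flipAlong M ρ) := by
  rintro e (he | ⟨k, rfl⟩)
  · exact ⟨fun h => (hF.notMem_range_of_mem_diff he).1 ⟨0, h.symm⟩,
      fun h => (hF.notMem_range_of_mem_diff he).2 ⟨0, h.symm⟩⟩
  · exact ⟨fun h => absurd (hF.injective h) (by omega), fun h => absurd (hF.injective h) (by omega)⟩

lemma crit_flipAlong : Crit (flipAlong M ρ) = insert (ρ 0) (Crit M) := by
  ext x
  refine ⟨fun hx => ?_, ?_⟩
  · refine or_iff_not_imp_left.2 fun hx0 e he => ?_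
    by_cases hup : e ∈ Set.range fun k => (ρ (2 * k + 1), ρ (2 * k))
    · obtain ⟨k, rfl⟩ := hup
      refine ⟨(hx _ (.inr ⟨k, rfl⟩)).1, ?_⟩
      rcases k with _ | k
      · exact fun h => hx0 h.symm
      · exact (hx _ (.inr ⟨k, rfl⟩)).2
    · exact hx e (.inl ⟨he, hup⟩)
  · rintro (rfl | hx)
    · exact hF.zero_mem_crit_flipAlong
    · rintro e (he | ⟨k, rfl⟩)
      · exact hx e he.1
      · exact ⟨(hx _ (hF.up_mem k)).1, (hx _ (hF.up_mem (k + 1))).2⟩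

/-- Both sides are represented by the rays of `H_M(P)` that avoid `ρ`. -/
lemma exists_equiv_rayClasses :
    ∃ e : RayClasses (HasseM (flipAlong M ρ)) ≃
      {K : RayClasses (HasseM M) // K.1 ≠ rayClass (HasseM M) ρ},
      ∀ C, ∃ t ∈ C.1, t ∈ (e C).1.1 := by
  refine _root_.exists_equiv_rayClasses (rayClass_mem_rayClasses hF.isRay)
    (Q := fun t => IsRay (HasseM M) t ∧ ∀ n, t n ∉ Set.range ρ) (fun t h => h.1)
    (fun t h => ⟨h.1.1, fun i => (hasseM_flipAlong_iff (.inl (h.2 i))).2 (h.1.2 i)⟩)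
    (fun t h ht => ?_) (fun s hs hs' => ?_) (fun s hs => ?_)
  · obtain ⟨a, b, hab⟩ := ht.2
    exact h.2 (b + 0) ⟨_, hab 0⟩
  · rcases hF.exists_tail_notMem_range_or_rayEquiv hs.2 with ⟨T, hT⟩ | h
    · exact ⟨_, ⟨hs.shift T, fun n => hT _ (by omega)⟩, rayEquiv_shift s T⟩
    · exact absurd ⟨hs, h⟩ hs'
  · obtain ⟨T, hT⟩ := hF.exists_tail_notMem_range_of_flipAlong hs.2
    refine ⟨_, ⟨⟨(hs.shift T).1, fun i => ?_⟩, fun n => hT _ (by omega)⟩, rayEquiv_shift s T⟩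
    exact (hasseM_flipAlong_iff (.inl (hT _ (by omega)))).1 ((hs.shift T).2 i)

end IsFlippable

end Flip

section Main

variable {P : Type*} [PartialOrder P] {M : Set (P × P)} {deg : P → ℕ} {ρ : ℕ → P}

/-- Start at a vertex of minimal degree and go an even number of steps past the last start of a
skip. -/
lemma IsMorse.exists_isFlippable (hM : IsMorse M) (hg : GradedDeg deg)
    (hfin : (RayClasses (HasseM M)).Finite) {r : ℕ → P} (hr : IsRay (HasseM M) r) :
    ∃ ρ, IsFlippable M ρ ∧ deg (ρ 0) = rayDeg deg ρ := by
  obtain ⟨j, hj⟩ := exists_deg_eq_rayDeg (deg := deg) r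
  have hmin : ∀ k l, deg (r (j + 2 * k)) ≤ deg (r l) := fun k l => by
    rw [deg_eq_of_minimal hM.1 hg hr.2 (fun l => hj ▸ rayDeg_le r l) k, hj]
    exact rayDeg_le r l
  obtain ⟨N, hN⟩ := exists_forall_skip_i_lt hM.2 hr hfin
  have hstep : ∀ k, _ := fun k => hasseM_step_of_minimal hM.1 hg hr.2 (hmin (N + k))
  have hρ : IsFlippable M fun k => r (j + 2 * N + k) := by
    refine ⟨hM, fun a b h => by simpa using hr.1 h, fun k => ?_, fun k => ?_, ⟨fun d => ?_⟩⟩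
    · simpa [mul_add, add_assoc] using (hstep k).1
    · simpa [mul_add, add_assoc] using (hstep k).2.1
    · obtain ⟨d', hd'⟩ := exists_skip_of_skip_shift hM.2 hr.2 d
      have := hN d'
      omega
  refine ⟨_, hρ, le_antisymm ?_ (rayDeg_le _ 0)⟩
  obtain ⟨k, hk⟩ := exists_deg_eq_rayDeg (deg := deg) fun k => r (j + 2 * N + k)
  rw [← hk, add_zero]
  exact hmin N _

def IsRayClassLabelling (deg : P → ℕ) (M' M : Set (P × P)) (c : RayClasses (HasseM M') → P) :
    Prop :=
  Function.Injective c ∧ (∀ K, c K ∉ Crit M') ∧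
    (∀ K : RayClasses (HasseM M'), ∀ s ∈ (K : Set (ℕ → P)), deg (c K) = rayDeg deg s) ∧
    Crit M = Crit M' ∪ Set.range c

namespace IsFlippable

variable (hF : IsFlippable M ρ)
include hF

/-- The class of `ρ` is labelled by `ρ 0`, which the flip made critical. -/
lemma exists_isRayClassLabelling (hg : GradedDeg deg) (hdeg : deg (ρ 0) = rayDeg deg ρ)
    (e : RayClasses (HasseM (flipAlong M ρ)) ≃
      {K : RayClasses (HasseM M) // K.1 ≠ rayClass (HasseM M) ρ})
    (he : ∀ C, ∃ t ∈ C.1, t ∈ (e C).1.1) {M₀ : Set (P × P)}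
    {c' : RayClasses (HasseM (flipAlong M ρ)) → P}
    (hc' : IsRayClassLabelling deg (flipAlong M ρ) M₀ c') :
    ∃ c, IsRayClassLabelling deg M M₀ c := by
  classical
  obtain ⟨hinj, hcrit, hdeg', hCrit⟩ := hc'
  let c : RayClasses (HasseM M) → P := fun K =>
    if h : K.1 = rayClass (HasseM M) ρ then ρ 0 else c' (e.symm ⟨K, h⟩)
  have hρ0 : ∀ C, c' C ≠ ρ 0 := fun C h => hcrit C (h ▸ hF.zero_mem_crit_flipAlong)
  have hrange : Set.range c = insert (ρ 0) (Set.range c') := by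
    refine (Set.range_subset_iff.2 fun K => ?_).antisymm
      (Set.insert_subset ⟨⟨_, rayClass_mem_rayClasses hF.isRay⟩, dif_pos rfl⟩
        (Set.range_subset_iff.2 fun C => ⟨(e C).1, by simp [c, (e C).2]⟩))
    by_cases h : K.1 = rayClass (HasseM M) ρ <;> simp [c, h]
  refine ⟨c, fun K K' hKK => ?_, fun K => ?_, fun K s hs => ?_, ?_⟩
  · simp only [c] at hKK
    split_ifs at hKK with h h'
    · exact Subtype.ext (h.trans h'.symm)
    · exact absurd hKK.symm (hρ0 _)
    · exact absurd hKK (hρ0 _)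
    · exact congrArg Subtype.val (e.symm.injective (hinj hKK))
  · by_cases h : K.1 = rayClass (HasseM M) ρ
    · simpa [c, h] using hF.notMem_crit 0
    · simp only [c, h, dite_false]
      exact fun hK => hcrit _ (hF.crit_flipAlong ▸ Set.mem_insert_of_mem _ hK)
  · by_cases h : K.1 = rayClass (HasseM M) ρ
    · rw [h] at hs
      simpa [c, h] using
        hdeg.trans (rayDeg_eq_of_rayEquiv hF.isMorse.1 hg hF.hasseM_succ hs.1.2 hs.2)
    · obtain ⟨t, htC, htK⟩ := he (e.symm ⟨K, h⟩)
      rw [e.apply_symm_apply] at htK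
      simp only [c, h, dite_false]
      rw [hdeg' _ t htC]
      exact rayDeg_eq_of_rayEquiv hF.isMorse.1 hg (isRay_of_mem K.2 htK).2 (isRay_of_mem K.2 hs).2
        (rayEquiv_of_mem K.2 htK hs)
  · rw [hCrit, hF.crit_flipAlong, hrange, Set.insert_union, Set.union_insert]

end IsFlippable

theorem IsMorse.exists_rayless (hg : GradedDeg deg) (hM : IsMorse M)
    (hfin : (RayClasses (HasseM M)).Finite) :
    ∃ M₀, IsMorse M₀ ∧ Rayless (HasseM M₀) ∧ ∃ c, IsRayClassLabelling deg M M₀ c := by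
  induction hn : Nat.card (RayClasses (HasseM M)) using Nat.strong_induction_on
    generalizing M with
  | _ n ih =>
  by_cases hray : Rayless (HasseM M)
  · have : IsEmpty (RayClasses (HasseM M)) := ⟨fun ⟨_, r, hr, _⟩ => hray ⟨r, hr⟩⟩
    exact ⟨M, hM, hray, isEmptyElim, fun K => isEmptyElim K, isEmptyElim, fun K => isEmptyElim K,
      by rw [Set.range_eq_empty, Set.union_empty]⟩
  obtain ⟨r, hr⟩ := not_not.1 hray
  obtain ⟨ρ, hF, hdeg⟩ := hM.exists_isFlippable hg hfin hr
  obtain ⟨e, he⟩ := hF.exists_equiv_rayClasses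
  have := hfin.to_subtype
  have hfin' : (RayClasses (HasseM (flipAlong M ρ))).Finite :=
    Set.finite_coe_iff.1 (Finite.of_equiv _ e.symm)
  have hlt : Nat.card (RayClasses (HasseM (flipAlong M ρ))) < n := by
    rw [← hn, Nat.card_congr e]
    exact Finite.card_subtype_lt (x := ⟨_, rayClass_mem_rayClasses hF.isRay⟩) (not_not.2 rfl)
  obtain ⟨M₀, hM₀, hray₀, c', hc'⟩ := ih _ hlt hF.isMorse_flipAlong hfin' rfl
  exact ⟨M₀, hM₀, hray₀, hF.exists_isRayClassLabelling hg hdeg e he hc'⟩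

end Main

/-- a Morse matching `M'` with finitely many equivalence classes of
rays may be replaced by a rayless Morse matching `M` whose critical elements are
those of `M'` plus one new element `c_[r]` for each equivalence class `[r]` of
rays, with `deg (c_[r])` the degree of the ray `r`. -/
theorem stmt4 {P : Type*} [PartialOrder P] (deg : P → ℕ) (hgraded : GradedDeg deg)
    (M' : Set (P × P)) (hM' : IsMorse M')
    (hfin : (RayClasses (HasseM M')).Finite) :
    ∃ M : Set (P × P), IsMorse M ∧ Rayless (HasseM M) ∧
      ∃ c : RayClasses (HasseM M') → P, Function.Injective c ∧
        (∀ K : RayClasses (HasseM M'), c K ∉ Crit M') ∧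
        (∀ K : RayClasses (HasseM M'), ∀ s ∈ (K : Set (ℕ → P)),
          deg (c K) = rayDeg deg s) ∧
        Crit M = Crit M' ∪ Set.range c :=
  hM'.exists_rayless hgraded hfin
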